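/- arXiv:1207.3119 — 2 statements merged into one kernel-verified Lean document; each statement's English description precedes it below -/
import Mathlib

section
/- Let F be a field of characteristic ≠ 2, let a, b, c ∈ F with d = b² − 4ac ≠ 0, let S = [[a, b/2],[b/2, c]], and define T(F) = {g ∈ GL₂(F) : ᵗg S g = det(g)·S}. Then T(F) = {x·I + y·ξ : x, y ∈ F, (x·I + y·ξ) invertible}, where ξ = [[b/2, c],[−a, −b/2]]; i.e., T(F) equals the group of invertible elements of the algebra F(ξ). -/
/-!
With `J = !![0, 1; -1, 0]` one has `J * gᵀ = adjugate g * J` for every `2 × 2` matrix `g`, and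
`J * S = ξ`. Multiplying by `J` and then by `g`, the condition `gᵀ S g = det g • S` becomes
`det g • ξ g = det g • g ξ`, so for invertible `g` it says exactly that `g` commutes with `ξ`.
As `2 ≠ 0` and `d ≠ 0`, `ξ` is not scalar, and the centralizer of a non-scalar `2 × 2` matrix `M`
is `span {1, M}`: `g` commutes with `M` iff the vectors `(m₀₀ - m₁₁, m₀₁, m₁₀)` of `M` and of `g`
have vanishing cross product, i.e. are proportional.
-/

open Matrix

theorem exists_smul_eq_of_cross_eq_zero {K : Type*} [Field K] {v w : Fin 3 → K} (hv : v ≠ 0)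
    (h : v ⨯₃ w = 0) : ∃ a : K, a • v = w := by
  by_contra! hw
  exact crossProduct_ne_zero_iff_linearIndependent.mpr ((LinearIndependent.pair_iff' hv).mpr hw) h

namespace Matrix

variable {R : Type*} [CommRing R]

-- `offScalar M = 0` exactly when `M` is a scalar matrix.
def offScalar (M : Matrix (Fin 2) (Fin 2) R) : Fin 3 → R := ![M 0 0 - M 1 1, M 0 1, M 1 0]

theorem commute_iff_offScalar_cross_eq_zero (g M : Matrix (Fin 2) (Fin 2) R) :
    Commute g M ↔ offScalar M ⨯₃ offScalar g = 0 := by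
  set x := offScalar M ⨯₃ offScalar g
  have hx : g * M - M * g = !![-x 0, -x 2; -x 1, x 0] := by
    ext i j
    fin_cases i <;> fin_cases j <;>
      simp [x, offScalar, cross_apply, mul_apply, Fin.sum_univ_two] <;> ring
  rw [Commute, SemiconjBy, ← sub_eq_zero, hx]
  simp only [← ext_iff, funext_iff, Fin.forall_fin_succ, Fin.isValue, of_apply, cons_val',
    cons_val_fin_one, cons_val_zero, cons_val_succ, zero_apply, Pi.zero_apply, neg_eq_zero,
    Fin.succ_zero_eq_one, Fin.succ_one_eq_two, IsEmpty.forall_iff, forall_const, and_true]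
  tauto

theorem commute_iff_exists_eq_smul_one_add_smul {K : Type*} [Field K]
    {M : Matrix (Fin 2) (Fin 2) K} (hM : offScalar M ≠ 0) (g : Matrix (Fin 2) (Fin 2) K) :
    Commute g M ↔ ∃ x y : K, g = x • 1 + y • M := by
  refine ⟨fun h ↦ ?_, ?_⟩
  · obtain ⟨y, hy⟩ := exists_smul_eq_of_cross_eq_zero hM
      ((commute_iff_offScalar_cross_eq_zero g M).mp h)
    have h0 := congr_fun hy 0
    have h1 := congr_fun hy 1
    have h2 := congr_fun hy 2
    simp only [offScalar, Fin.isValue, Pi.smul_apply, cons_val_zero, smul_eq_mul, cons_val_one,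
      cons_val] at h0 h1 h2
    refine ⟨g 1 1 - y * M 1 1, y, ?_⟩
    ext i j
    fin_cases i <;> fin_cases j <;>
      simp only [Fin.zero_eta, Fin.mk_one, Fin.isValue, add_apply, smul_apply, smul_eq_mul,
        one_apply_eq, one_apply_ne, ne_eq, zero_ne_one, one_ne_zero, not_false_eq_true, mul_one,
        mul_zero, zero_add, sub_add_cancel]
    · linear_combination -h0
    · linear_combination -h1
    · linear_combination -h2
  · rintro ⟨x, y, rfl⟩
    exact ((Commute.one_left M).smul_left x).add_left ((Commute.refl M).smul_left y)

theorem mul_transpose_eq_adjugate_mul (g : Matrix (Fin 2) (Fin 2) R) :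
    !![0, 1; -1, 0] * gᵀ = adjugate g * !![0, 1; -1, 0] := by
  ext i j
  fin_cases i <;> fin_cases j <;> simp [adjugate_fin_two, mul_apply, Fin.sum_univ_two]

theorem transpose_mul_mul_eq_det_smul_iff_commute {g : Matrix (Fin 2) (Fin 2) R} (hg : IsUnit g)
    (S : Matrix (Fin 2) (Fin 2) R) :
    gᵀ * S * g = g.det • S ↔ Commute g (!![0, 1; -1, 0] * S) := by
  set J : Matrix (Fin 2) (Fin 2) R := !![0, 1; -1, 0]
  have hJ : IsUnit J := IsUnit.of_mul_eq_one (-J) (by simp [J, one_fin_two])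
  have hdet : IsUnit g.det := (isUnit_iff_isUnit_det g).mp hg
  calc gᵀ * S * g = g.det • S
      ↔ adjugate g * (J * S) * g = g.det • (J * S) := by
        rw [← hJ.mul_right_inj, mul_smul_comm, ← mul_assoc, ← mul_assoc,
          mul_transpose_eq_adjugate_mul, mul_assoc _ J]
    _ ↔ g.det • (J * S * g) = g.det • (g * (J * S)) := by
        rw [← hg.mul_right_inj, ← mul_assoc, ← mul_assoc, mul_adjugate, smul_mul_assoc,
          smul_mul_assoc, one_mul, mul_smul_comm]
    _ ↔ Commute g (J * S) := by
        rw [hdet.smul_left_cancel, Commute, SemiconjBy, eq_comm]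

theorem J_mul_symmetric (a β c : R) :
    !![0, 1; -1, 0] * !![a, β; β, c] = !![β, c; -a, -β] := by
  simp

end Matrix

theorem stmt2 (F : Type*) [Field F] (h2 : (2 : F) ≠ 0) (a b c : F)
    (hd : b ^ 2 - 4 * a * c ≠ 0) :
    {g : Matrix (Fin 2) (Fin 2) F | IsUnit g ∧
        gᵀ * !![a, b / 2; b / 2, c] * g = g.det • !![a, b / 2; b / 2, c]}
      = {g : Matrix (Fin 2) (Fin 2) F | IsUnit g ∧
          ∃ x y : F, g = x • (1 : Matrix (Fin 2) (Fin 2) F) + y • !![b / 2, c; -a, -b / 2]} := by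
  have hξ : offScalar !![b / 2, c; -a, -b / 2] ≠ 0 := by
    intro h
    have : NeZero (2 : F) := ⟨h2⟩
    have h0 : b / 2 - -b / 2 = 0 := congr_fun h 0
    have hb : b = 0 := by simpa [neg_div] using h0
    have hc : c = 0 := congr_fun h 1
    exact hd (by simp [hb, hc])
  ext g
  refine and_congr_right fun hg ↦ ?_
  rw [transpose_mul_mul_eq_det_smul_iff_commute hg, J_mul_symmetric, ← neg_div,
    commute_iff_exists_eq_smul_one_add_smul hξ]
end

section
/- Let m be a positive integer. Then GL₂(o) = T(o)_m·Γ₀(p) ⊔ T(o)_m·[[0,1],[1,0]]·Γ₀(p), a disjoint union, where T(o)_m is as defined previously. -/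
/-!
Conjugating by `diag(ϖ^m, 1)` multiplies the lower-left entry by `ϖ^m`, so `T(o)_m ⊆ Γ₀(p)`
and `T(o)_m Γ₀(p) = Γ₀(p)` is the set of `g` with `g₁₀ ∈ p`. On the other hand `(t w k)₁₀` is
`t₁₁ k₀₀` modulo `p`, a unit, for `t, k ∈ Γ₀(p)`, so the two cosets are disjoint. If `g₁₀` is a
unit, there is an explicit `t ∈ T(o)_m` whose second column is `c` times the first column of
`g`; then `t⁻¹ g` has vanishing upper-left entry, i.e. `w t⁻¹ g ∈ Γ₀(p)`.
-/

open Matrix IsLocalRing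

section Iwahori

variable {R : Type*} [CommRing R]

lemma swap_mul_swap : (!![0, 1; 1, 0] : Matrix (Fin 2) (Fin 2) R) * !![0, 1; 1, 0] = 1 := by
  rw [mul_fin_two, one_fin_two]
  simp

lemma exists_eq_mul_swap_mul {t g : Matrix (Fin 2) (Fin 2) R} (ht : IsUnit t) (hg : IsUnit g)
    (hcol : t 1 1 * g 0 0 = t 0 1 * g 1 0) :
    ∃ k, IsUnit k ∧ k 1 0 = 0 ∧ g = t * !![0, 1; 1, 0] * k := by
  set w : Matrix (Fin 2) (Fin 2) R := !![0, 1; 1, 0]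
  have hw : IsUnit w := IsUnit.of_mul_eq_one w swap_mul_swap
  refine ⟨w * t⁻¹ * g, (hw.mul (isUnit_nonsing_inv_iff.2 ht)).mul hg, ?_, ?_⟩
  · rw [inv_def, adjugate_fin_two]
    simp [w, mul_apply, Fin.sum_univ_two, mul_assoc, hcol]
  · have htt : t * t⁻¹ = 1 := mul_nonsing_inv t ((isUnit_iff_isUnit_det t).1 ht)
    calc g = t * (w * w) * t⁻¹ * g := by rw [swap_mul_swap, Matrix.mul_one, htt, Matrix.one_mul]
      _ = t * w * (w * t⁻¹ * g) := by simp only [Matrix.mul_assoc]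

variable [IsLocalRing R]

variable (R) in
def iwahori : Set (Matrix (Fin 2) (Fin 2) R) :=
  {k | IsUnit k ∧ k 1 0 ∈ maximalIdeal R}

lemma apply_zero_zero_notMem_of_mem_iwahori {k : Matrix (Fin 2) (Fin 2) R} (hk : k ∈ iwahori R) :
    k 0 0 ∉ maximalIdeal R ∧ k 1 1 ∉ maximalIdeal R := by
  have hdet : k.det ∉ maximalIdeal R := notMem_maximalIdeal.2 ((isUnit_iff_isUnit_det k).1 hk.1)
  have hdiag : k 0 0 * k 1 1 ∉ maximalIdeal R := by
    rwa [det_fin_two, Submodule.sub_mem_iff_left _ (Ideal.mul_mem_left _ _ hk.2)] at hdet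
  exact ⟨fun h ↦ hdiag (Ideal.mul_mem_right _ _ h), fun h ↦ hdiag (Ideal.mul_mem_left _ _ h)⟩

lemma mul_mem_iwahori {t k : Matrix (Fin 2) (Fin 2) R} (ht : t ∈ iwahori R) (hk : k ∈ iwahori R) :
    t * k ∈ iwahori R := by
  refine ⟨ht.1.mul hk.1, ?_⟩
  simp only [mul_apply, Fin.sum_univ_two]
  exact Ideal.add_mem _ (Ideal.mul_mem_right _ _ ht.2) (Ideal.mul_mem_left _ _ hk.2)

lemma mul_swap_mul_apply_one_zero_notMem {t k : Matrix (Fin 2) (Fin 2) R} (ht : t ∈ iwahori R)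
    (hk : k ∈ iwahori R) :
    (t * (!![0, 1; 1, 0] : Matrix (Fin 2) (Fin 2) R) * k) 1 0 ∉ maximalIdeal R := by
  have hunit : t 1 1 * k 0 0 ∉ maximalIdeal R := notMem_maximalIdeal.2
    ((notMem_maximalIdeal.1 (apply_zero_zero_notMem_of_mem_iwahori ht).2).mul
      (notMem_maximalIdeal.1 (apply_zero_zero_notMem_of_mem_iwahori hk).1))
  have hentry : (t * (!![0, 1; 1, 0] : Matrix (Fin 2) (Fin 2) R) * k) 1 0 =
      t 1 1 * k 0 0 + t 1 0 * k 1 0 := by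
    simp [mul_apply, Fin.sum_univ_two]
  rwa [hentry, Ideal.add_mem_iff_left _ (Ideal.mul_mem_right _ _ ht.2)]

theorem xor_exists_mul_iwahori {T : Set (Matrix (Fin 2) (Fin 2) R)} (hT₁ : 1 ∈ T)
    (hT : T ⊆ iwahori R)
    (hswap : ∀ g : Matrix (Fin 2) (Fin 2) R, IsUnit g → g 1 0 ∉ maximalIdeal R →
      ∃ t ∈ T, ∃ k ∈ iwahori R, g = t * !![0, 1; 1, 0] * k)
    {g : Matrix (Fin 2) (Fin 2) R} (hg : IsUnit g) :
    Xor (∃ t ∈ T, ∃ k ∈ iwahori R, g = t * k)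
      (∃ t ∈ T, ∃ k ∈ iwahori R, g = t * !![0, 1; 1, 0] * k) := by
  have h₁ : (∃ t ∈ T, ∃ k ∈ iwahori R, g = t * k) ↔ g 1 0 ∈ maximalIdeal R :=
    ⟨by rintro ⟨t, ht, k, hk, rfl⟩; exact (mul_mem_iwahori (hT ht) hk).2,
      fun h ↦ ⟨1, hT₁, g, ⟨hg, h⟩, (Matrix.one_mul g).symm⟩⟩
  have h₂ : (∃ t ∈ T, ∃ k ∈ iwahori R, g = t * !![0, 1; 1, 0] * k) ↔ g 1 0 ∉ maximalIdeal R :=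
    ⟨by rintro ⟨t, ht, k, hk, rfl⟩; exact mul_swap_mul_apply_one_zero_notMem (hT ht) hk,
      hswap g hg⟩
  rw [h₁, h₂, xor_not_right]

end Iwahori

/-- These are the matrices `x + y • !![B, C; -A, -B]` with `x = p - y * B`, written without
division by `2`. -/
lemma transpose_mul_mul_eq_det_smul {K : Type*} [CommRing K] (A B C p y : K) :
    (!![p, y * C; -(y * A), p - 2 * y * B])ᵀ * !![A, B; B, C] *
        !![p, y * C; -(y * A), p - 2 * y * B] =
      (!![p, y * C; -(y * A), p - 2 * y * B]).det • !![A, B; B, C] := by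
  ext i j
  fin_cases i <;> fin_cases j <;> simp [mul_apply, Fin.sum_univ_two, det_fin_two] <;> ring

lemma diag_mul_mul_diag_apply_one_zero {K : Type*} [Semiring K] (x y : K)
    (X : Matrix (Fin 2) (Fin 2) K) :
    (!![y, 0; 0, 1] * X * !![x, 0; 0, 1]) 1 0 = X 1 0 * x := by
  simp [mul_apply, Fin.sum_univ_two, vecMul, dotProduct]

section TorusLevel

variable {R : Type*} [CommRing R] (F : Type*) [Field F] [Algebra R F]

def torusLevel (S : Matrix (Fin 2) (Fin 2) F) (ϖ : R) (m : ℕ) : Set (Matrix (Fin 2) (Fin 2) R) :=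
  {g | IsUnit g ∧ ∃ t : Matrix (Fin 2) (Fin 2) R, IsUnit t ∧
    (t.map (algebraMap R F))ᵀ * S * t.map (algebraMap R F) = (t.map (algebraMap R F)).det • S ∧
    g.map (algebraMap R F) =
      !![(algebraMap R F ϖ)⁻¹ ^ m, 0; 0, 1] * t.map (algebraMap R F) *
        !![(algebraMap R F ϖ) ^ m, 0; 0, 1]}

variable {F}

lemma one_mem_torusLevel (S : Matrix (Fin 2) (Fin 2) F) {ϖ : R} (hϖ : algebraMap R F ϖ ≠ 0)
    (m : ℕ) : 1 ∈ torusLevel F S ϖ m := by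
  refine ⟨isUnit_one, 1, isUnit_one, by simp, ?_⟩
  rw [Matrix.map_one _ (map_zero _) (map_one _), Matrix.mul_one, mul_fin_two, one_fin_two]
  simp [hϖ]

lemma torusLevel_subset_iwahori [IsLocalRing R] (hf : Function.Injective (algebraMap R F))
    (S : Matrix (Fin 2) (Fin 2) F) {ϖ : R} (hϖ : ϖ ∈ maximalIdeal R) {m : ℕ} (hm : 0 < m) :
    torusLevel F S ϖ m ⊆ iwahori R := by
  rintro g ⟨hg, t, -, -, hconj⟩
  have hg₁₀ : g 1 0 = t 1 0 * ϖ ^ m := hf <| by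
    have h := congrFun (congrFun hconj 1) 0
    rwa [diag_mul_mul_diag_apply_one_zero, map_apply, map_apply, ← map_pow, ← map_mul] at h
  exact ⟨hg, hg₁₀ ▸ Ideal.mul_mem_left _ _ (Ideal.pow_mem_of_mem _ hϖ m hm)⟩

lemma mem_torusLevel_of_isUnit {ϖ : R} (hϖ : algebraMap R F ϖ ≠ 0) (m : ℕ) {a b b' c : R}
    (hb' : algebraMap R F b' = 2 * (algebraMap R F b / 2)) {α u : R}
    (ht : IsUnit !![α, u * c; -(u * ϖ ^ m * a * ϖ ^ m), α - u * ϖ ^ m * b']) :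
    !![α, u * c; -(u * ϖ ^ m * a * ϖ ^ m), α - u * ϖ ^ m * b'] ∈ torusLevel F
      !![algebraMap R F a, algebraMap R F b / 2; algebraMap R F b / 2, algebraMap R F c] ϖ m := by
  set y := u * ϖ ^ m
  set t' : Matrix (Fin 2) (Fin 2) R := !![α, y * c; -(y * a), α - y * b']
  have hdet : t'.det = (!![α, u * c; -(y * a * ϖ ^ m), α - y * b']).det := by
    simp only [t', y, det_fin_two_of]; ring
  have hmap : t'.map (algebraMap R F) = !![algebraMap R F α, algebraMap R F y * algebraMap R F c;
      -(algebraMap R F y * algebraMap R F a),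
      algebraMap R F α - 2 * algebraMap R F y * (algebraMap R F b / 2)] := by
    ext i j; fin_cases i <;> fin_cases j <;> simp [t', hb']
    ring
  refine ⟨ht, t', ?_, ?_, ?_⟩
  · rw [isUnit_iff_isUnit_det, hdet, ← isUnit_iff_isUnit_det]; exact ht
  · rw [hmap]; exact transpose_mul_mul_eq_det_smul _ _ _ _ _
  · rw [hmap]
    ext i j
    fin_cases i <;> fin_cases j <;> simp [mul_apply, Fin.sum_univ_two, y, hb'] <;> field_simp

lemma exists_mem_torusLevel_mul_swap_mul [IsLocalRing R] {ϖ : R} (hϖ₀ : algebraMap R F ϖ ≠ 0)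
    (hϖ : ϖ ∈ maximalIdeal R) {m : ℕ} (hm : 0 < m) (a b : R) {c : R} (hc : IsUnit c)
    {g : Matrix (Fin 2) (Fin 2) R} (hg : IsUnit g) (hg₁₀ : g 1 0 ∉ maximalIdeal R) :
    ∃ t ∈ torusLevel F
      !![algebraMap R F a, algebraMap R F b / 2; algebraMap R F b / 2, algebraMap R F c] ϖ m,
      ∃ k ∈ iwahori R, g = t * !![0, 1; 1, 0] * k := by
  -- `b'` stands in for `2 * (b / 2)`, which is `0` rather than `b` when `2 = 0` in `F`.
  obtain ⟨b', hb'⟩ : ∃ b' : R, algebraMap R F b' = 2 * (algebraMap R F b / 2) := by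
    by_cases h2 : (2 : F) = 0
    · exact ⟨0, by simp [h2]⟩
    · exact ⟨b, by field_simp⟩
  set u := g 0 0
  set α := c * g 1 0 + u * ϖ ^ m * b'
  set t : Matrix (Fin 2) (Fin 2) R := !![α, u * c; -(u * ϖ ^ m * a * ϖ ^ m), α - u * ϖ ^ m * b']
  have hdet : t.det = (c * g 1 0) ^ 2 + ϖ ^ m * (u * (b' * c * g 1 0 + u * ϖ ^ m * c * a)) := by
    simp only [t, α, det_fin_two_of]; ring
  have ht : IsUnit t := by
    rw [isUnit_iff_isUnit_det, hdet, ← notMem_maximalIdeal,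
      Ideal.add_mem_iff_left _ (Ideal.mul_mem_right _ _ (Ideal.pow_mem_of_mem _ hϖ m hm)),
      notMem_maximalIdeal]
    exact (hc.mul (notMem_maximalIdeal.1 hg₁₀)).pow 2
  obtain ⟨k, hk, hk₁₀, hgk⟩ :=
    exists_eq_mul_swap_mul ht hg (by simp [t, α, u, mul_comm, mul_assoc, mul_left_comm])
  exact ⟨t, mem_torusLevel_of_isUnit hϖ₀ m hb' ht, k, ⟨hk, hk₁₀ ▸ zero_mem _⟩, hgk⟩

end TorusLevel

open Matrix in
theorem stmt13_general (R : Type*) [CommRing R] [IsDomain R] [IsDiscreteValuationRing R]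
    (F : Type*) [Field F] [Algebra R F] [IsFractionRing R F]
    (ϖ : R) (hϖ : Irreducible ϖ)
    (a b : R) (c : Rˣ)
    (S : Matrix (Fin 2) (Fin 2) F)
    (hS : S = !![algebraMap R F a, algebraMap R F b / 2;
                 algebraMap R F b / 2, algebraMap R F (c : R)])
    (m : ℕ) (hm : 1 ≤ m)
    (Γ₀ : Set (Matrix (Fin 2) (Fin 2) R))
    (hΓ₀ : Γ₀ = {k | IsUnit k ∧ k 1 0 ∈ IsLocalRing.maximalIdeal R})
    (Tm : Set (Matrix (Fin 2) (Fin 2) R))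
    (hTm : Tm = {g | IsUnit g ∧ ∃ t : Matrix (Fin 2) (Fin 2) R, IsUnit t ∧
        (t.map (algebraMap R F))ᵀ * S * t.map (algebraMap R F)
          = (t.map (algebraMap R F)).det • S ∧
        g.map (algebraMap R F) =
          !![(algebraMap R F ϖ)⁻¹ ^ m, 0; 0, 1] * t.map (algebraMap R F) *
            !![(algebraMap R F ϖ) ^ m, 0; 0, 1]}) :
    ∀ g : Matrix (Fin 2) (Fin 2) R, IsUnit g →
      Xor' (∃ t ∈ Tm, ∃ k ∈ Γ₀, g = t * k)
        (∃ t ∈ Tm, ∃ k ∈ Γ₀, g = t * !![0, 1; 1, 0] * k) := by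
  subst hS hΓ₀ hTm
  intro g hg
  have hf := IsFractionRing.injective R F
  have hϖ𝔪 : ϖ ∈ maximalIdeal R := (mem_maximalIdeal ϖ).2 hϖ.not_isUnit
  have hϖ₀ : algebraMap R F ϖ ≠ 0 := (map_ne_zero_iff _ hf).2 hϖ.ne_zero
  exact xor_exists_mul_iwahori (one_mem_torusLevel _ hϖ₀ m)
    (torusLevel_subset_iwahori hf _ hϖ𝔪 hm)
    (fun g hg hg₁₀ ↦ exists_mem_torusLevel_mul_swap_mul hϖ₀ hϖ𝔪 hm a b c.isUnit hg hg₁₀) hg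

open Matrix in
theorem stmt13 (R : Type*) [CommRing R] [IsDomain R] [IsDiscreteValuationRing R]
    (F : Type*) [Field F] [Algebra R F] [IsFractionRing R F]
    (ϖ : R) (hϖ : Irreducible ϖ)
    (a b : R) (c : Rˣ)
    (hd : b ^ 2 - 4 * a * (c : R) ≠ 0)
    (hdassum : IsSquare (b ^ 2 - 4 * a * (c : R)) → IsUnit (b ^ 2 - 4 * a * (c : R)))
    (S : Matrix (Fin 2) (Fin 2) F)
    (hS : S = !![algebraMap R F a, algebraMap R F b / 2;
                 algebraMap R F b / 2, algebraMap R F (c : R)])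
    (m : ℕ) (hm : 1 ≤ m)
    (Γ₀ : Set (Matrix (Fin 2) (Fin 2) R))
    (hΓ₀ : Γ₀ = {k | IsUnit k ∧ k 1 0 ∈ IsLocalRing.maximalIdeal R})
    (Tm : Set (Matrix (Fin 2) (Fin 2) R))
    (hTm : Tm = {g | IsUnit g ∧ ∃ t : Matrix (Fin 2) (Fin 2) R, IsUnit t ∧
        (t.map (algebraMap R F))ᵀ * S * t.map (algebraMap R F)
          = (t.map (algebraMap R F)).det • S ∧
        g.map (algebraMap R F) =
          !![(algebraMap R F ϖ)⁻¹ ^ m, 0; 0, 1] * t.map (algebraMap R F) *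
            !![(algebraMap R F ϖ) ^ m, 0; 0, 1]}) :
    ∀ g : Matrix (Fin 2) (Fin 2) R, IsUnit g →
      Xor' (∃ t ∈ Tm, ∃ k ∈ Γ₀, g = t * k)
        (∃ t ∈ Tm, ∃ k ∈ Γ₀, g = t * !![0, 1; 1, 0] * k) :=
  stmt13_general R F ϖ hϖ a b c S hS m hm Γ₀ hΓ₀ Tm hTm
end
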